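/- Let C ∈ ℝ^{p²×p²} be diagonal positive definite, r > 0, Q ∈ ℝ^{p×p} symmetric positive definite, m ∈ ℕ, and P a symmetric positive definite matrix of size k (with k = p·|I_l|). Define J(Γ̃, λ, Λ̃) = −|I_s| log det Γ̃ + tr(Γ̃ C) + λ r + tr(Λ̃ Q) − log det(λ I_{p²} ⊗ P⁻¹ + Λ̃ ⊗ I_k) on the domain {Γ̃ diagonal positive definite, λ ≥ 0, Λ̃ positive semidefinite with λ I_{p²} ⊗ P⁻¹ + Λ̃ ⊗ I_k positive definite}. Then J is bounded below and attains its minimum on this domain. -/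

import Mathlib

open Matrix Kronecker Real
set_option linter.unusedSectionVars false
set_option maxHeartbeats 2000000
namespace StmtAux
variable {n m : Type*} [Fintype n] [Fintype m] [DecidableEq n] [DecidableEq m]
variable {n m : Type*} [Fintype n] [Fintype m] [DecidableEq n] [DecidableEq m]

lemma log_le_div {s t : ℝ} (hs : 0 < s) (ht : 0 < t) :
    Real.log t ≤ t / s - 1 + Real.log s := by
  have h := Real.log_le_sub_one_of_pos (x := t / s) (by positivity)
  have h2 : Real.log (t / s) = Real.log t - Real.log s :=
    Real.log_div (ne_of_gt ht) (ne_of_gt hs)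
  linarith

lemma quad_eq (A : Matrix n n ℝ) (x : n → ℝ) :
    dotProduct (star x) (A *ᵥ x) = ∑ i, ∑ j, x i * A i j * x j := by
  simp [dotProduct, Matrix.mulVec, Finset.mul_sum, mul_comm, mul_assoc, mul_left_comm]

lemma trace_eq_sum_eigenvalues {A : Matrix n n ℝ} (hA : A.IsHermitian) :
    A.trace = ∑ i, hA.eigenvalues i := by
  conv_lhs => rw [hA.spectral_theorem, Unitary.conjStarAlgAut_apply]
  rw [Matrix.trace_mul_cycle]
  rw [show (star (hA.eigenvectorUnitary : Matrix n n ℝ)) * (hA.eigenvectorUnitary : Matrix n n ℝ) = 1 from Unitary.coe_star_mul_self _]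
  simp [Matrix.trace_diagonal]

lemma posdef_trace_pos [Nonempty n] {A : Matrix n n ℝ} (hA : A.PosDef) : 0 < A.trace := by
  rw [trace_eq_sum_eigenvalues hA.1]
  exact Finset.sum_pos (fun i _ => hA.eigenvalues_pos i) Finset.univ_nonempty

lemma psd_diag_nonneg {A : Matrix n n ℝ} (hA : A.PosSemidef) (i : n) : 0 ≤ A i i := by
  have := hA.dotProduct_mulVec_nonneg (Pi.single i 1)
  rw [quad_eq] at this
  simpa [Pi.single_apply, Finset.sum_ite_eq, Finset.sum_ite_eq'] using this

lemma psd_trace_nonneg {A : Matrix n n ℝ} (hA : A.PosSemidef) : 0 ≤ A.trace :=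
  Finset.sum_nonneg fun i _ => psd_diag_nonneg hA i

lemma psd_diag_le_trace {A : Matrix n n ℝ} (hA : A.PosSemidef) (i : n) : A i i ≤ A.trace :=
  Finset.single_le_sum (fun j _ => psd_diag_nonneg hA j) (Finset.mem_univ i)

lemma psd_quad_single {A : Matrix n n ℝ} (hA : A.PosSemidef) (i j : n) (s : ℝ) :
    0 ≤ A i i + s * A i j + s * A j i + s * s * A j j := by
  have h := hA.dotProduct_mulVec_nonneg (Pi.single i 1 + Pi.single j s)
  rw [quad_eq] at h
  rcases eq_or_ne i j with rfl | hij
  · simp only [Pi.add_apply, Pi.single_apply, add_mul, mul_add, Finset.sum_add_distrib,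
      ite_mul, mul_ite, one_mul, mul_one, zero_mul, mul_zero, Finset.sum_ite_eq,
      Finset.sum_ite_eq', Finset.mem_univ, if_true] at h
    ring_nf at h ⊢
    nlinarith [h]
  · simp only [Pi.add_apply, Pi.single_apply, add_mul, mul_add, Finset.sum_add_distrib,
      ite_mul, mul_ite, one_mul, mul_one, zero_mul, mul_zero, Finset.sum_ite_eq,
      Finset.sum_ite_eq', Finset.mem_univ, if_true] at h
    ring_nf at h ⊢
    linarith

lemma psd_abs_le_trace {A : Matrix n n ℝ} (hA : A.PosSemidef) (i j : n) :
    |A i j| ≤ A.trace := by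
  rcases eq_or_ne i j with rfl | hij
  · rw [abs_of_nonneg (psd_diag_nonneg hA i)]; exact psd_diag_le_trace hA i
  · have hsym : A j i = A i j := by
      have h1 := hA.1
      calc A j i = Aᴴ i j := by simp [Matrix.conjTranspose_apply]
        _ = A i j := by rw [h1]
    have h1 := psd_quad_single hA i j 1
    have h2 := psd_quad_single hA i j (-1)
    have hij2 : A i i + A j j ≤ A.trace := by
      have h3 : ∑ k ∈ ({i, j} : Finset n), A k k ≤ A.trace :=
        Finset.sum_le_sum_of_subset_of_nonneg (Finset.subset_univ _)
          (fun k _ _ => psd_diag_nonneg hA k)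
      rwa [Finset.sum_pair hij] at h3
    have ht := psd_trace_nonneg hA
    rw [abs_le]; constructor <;> nlinarith

open scoped MatrixOrder in
lemma trace_mul_nonneg {A B : Matrix n n ℝ} (hA : A.PosSemidef) (hB : B.PosSemidef) :
    0 ≤ (A * B).trace := by
  have hs : (CFC.sqrt A).PosSemidef := (CFC.sqrt_nonneg A).posSemidef
  have h1 : A * B = CFC.sqrt A * (CFC.sqrt A * B) := by
    rw [← Matrix.mul_assoc, CFC.sqrt_mul_sqrt_self A hA.nonneg]
  rw [h1, Matrix.trace_mul_comm, Matrix.mul_assoc]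
  have h2 : (CFC.sqrt A * B * CFC.sqrt A).PosSemidef := by
    have := hB.conjTranspose_mul_mul_same (CFC.sqrt A)
    rwa [hs.1] at this
  rw [← Matrix.mul_assoc]
  exact psd_trace_nonneg h2

lemma smul_psd {A : Matrix n n ℝ} (hA : A.PosSemidef) {r : ℝ} (hr : 0 ≤ r) :
    (r • A).PosSemidef := by
  refine Matrix.PosSemidef.of_dotProduct_mulVec_nonneg ?_ fun x => ?_
  · have h := hA.1
    unfold Matrix.IsHermitian at *
    rw [Matrix.conjTranspose_smul, h]
    simp [star_trivial]
  · rw [Matrix.smul_mulVec, dotProduct_smul]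
    exact mul_nonneg hr (hA.dotProduct_mulVec_nonneg x)

lemma exists_eps [Nonempty n] {Q : Matrix n n ℝ} (hQ : Q.PosDef) :
    ∃ ε : ℝ, 0 < ε ∧ ∀ Λ : Matrix n n ℝ, Λ.PosSemidef → ε * Λ.trace ≤ (Λ * Q).trace := by
  classical
  set e := hQ.1.eigenvalues with he
  set ε := Finset.univ.inf' Finset.univ_nonempty e with hε
  have hεpos : 0 < ε := by
    rw [hε, Finset.lt_inf'_iff]
    exact fun i _ => hQ.eigenvalues_pos i
  have hdiagpsd : (Matrix.diagonal (fun i => e i - ε)).PosSemidef :=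
    Matrix.posSemidef_diagonal_iff.2 fun i =>
      sub_nonneg.2 (Finset.inf'_le _ (Finset.mem_univ i))
  have hofid : (RCLike.ofReal ∘ e : n → ℝ) = e := by funext i; simp
  have hkey : Q - ε • (1 : Matrix n n ℝ) =
      (hQ.1.eigenvectorUnitary : Matrix n n ℝ) * Matrix.diagonal (fun i => e i - ε) *
        (hQ.1.eigenvectorUnitary : Matrix n n ℝ)ᴴ := by
    have hUU : (hQ.1.eigenvectorUnitary : Matrix n n ℝ) *
        (hQ.1.eigenvectorUnitary : Matrix n n ℝ)ᴴ = 1 := by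
      rw [← Matrix.star_eq_conjTranspose]
      exact Unitary.coe_mul_star_self _
    have hdiag : Matrix.diagonal (fun i => e i - ε) = Matrix.diagonal e - ε • 1 := by
      ext i j
      rcases eq_or_ne i j with rfl | h
      · simp [Matrix.one_apply, Matrix.diagonal_apply]
      · simp [Matrix.one_apply, Matrix.diagonal_apply, h]
    rw [hdiag, Matrix.mul_sub, Matrix.sub_mul]
    have hspec := hQ.1.spectral_theorem
    rw [hofid, Unitary.conjStarAlgAut_apply] at hspec
    rw [← Matrix.star_eq_conjTranspose, ← hspec]
    congr 1
    rw [Matrix.mul_smul, Matrix.mul_one, Matrix.smul_mul, Matrix.star_eq_conjTranspose, hUU]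
  have hpsd : (Q - ε • (1 : Matrix n n ℝ)).PosSemidef := by
    rw [hkey]
    exact hdiagpsd.mul_mul_conjTranspose_same _
  refine ⟨ε, hεpos, fun Λ hΛ => ?_⟩
  have h0 := trace_mul_nonneg hΛ hpsd
  have hexp : Λ * (Q - ε • (1 : Matrix n n ℝ)) = Λ * Q - ε • Λ := by
    rw [Matrix.mul_sub, Matrix.mul_smul, Matrix.mul_one]
  rw [hexp, Matrix.trace_sub, Matrix.trace_smul] at h0
  simp only [smul_eq_mul] at h0
  linarith

variable {n m : Type*} [Fintype n] [Fintype m] [DecidableEq n] [DecidableEq m]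

lemma kron_herm {A : Matrix n n ℝ} {B : Matrix m m ℝ} (hA : A.IsHermitian)
    (hB : B.IsHermitian) : (A ⊗ₖ B).IsHermitian := by
  ext ⟨i, k⟩ ⟨j, l⟩
  simp only [Matrix.conjTranspose_apply, Matrix.kroneckerMap_apply, star_trivial]
  rw [show A j i = A i j from by conv_lhs => rw [← hA, Matrix.conjTranspose_apply, star_trivial],
    show B l k = B k l from by conv_lhs => rw [← hB, Matrix.conjTranspose_apply, star_trivial]]

lemma mulVec_one_kron (B : Matrix m m ℝ) (x : n × m → ℝ) (i : n) (k : m) :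
    (((1 : Matrix n n ℝ) ⊗ₖ B) *ᵥ x) (i, k) = (B *ᵥ fun l => x (i, l)) k := by
  simp [Matrix.mulVec, dotProduct, Fintype.sum_prod_type, Matrix.one_apply,
    ite_mul, zero_mul, Finset.sum_ite_eq, Finset.sum_ite_eq']

lemma quad_one_kron (B : Matrix m m ℝ) (x : n × m → ℝ) :
    dotProduct (star x) (((1 : Matrix n n ℝ) ⊗ₖ B) *ᵥ x)
      = ∑ i, dotProduct (star fun k => x (i, k)) (B *ᵥ fun k => x (i, k)) := by
  simp only [dotProduct, star_trivial, Pi.star_apply]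
  rw [Fintype.sum_prod_type]
  refine Finset.sum_congr rfl fun i _ => Finset.sum_congr rfl fun k _ => ?_
  rw [mulVec_one_kron]

lemma mulVec_kron_one (A : Matrix n n ℝ) (x : n × m → ℝ) (i : n) (k : m) :
    ((A ⊗ₖ (1 : Matrix m m ℝ)) *ᵥ x) (i, k) = (A *ᵥ fun j => x (j, k)) i := by
  simp [Matrix.mulVec, dotProduct, Fintype.sum_prod_type, Matrix.one_apply,
    mul_ite, mul_zero, Finset.sum_ite_eq, Finset.sum_ite_eq']

lemma quad_kron_one (A : Matrix n n ℝ) (x : n × m → ℝ) :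
    dotProduct (star x) ((A ⊗ₖ (1 : Matrix m m ℝ)) *ᵥ x)
      = ∑ k, dotProduct (star fun j => x (j, k)) (A *ᵥ fun j => x (j, k)) := by
  simp only [dotProduct, star_trivial, Pi.star_apply]
  rw [Fintype.sum_prod_type, Finset.sum_comm]
  refine Finset.sum_congr rfl fun k _ => Finset.sum_congr rfl fun i _ => ?_
  rw [mulVec_kron_one]

lemma one_kron_posdef {B : Matrix m m ℝ} (hB : B.PosDef) :
    ((1 : Matrix n n ℝ) ⊗ₖ B).PosDef := by
  refine Matrix.PosDef.of_dotProduct_mulVec_pos (kron_herm Matrix.isHermitian_one hB.1) fun x hx => ?_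
  rw [quad_one_kron]
  obtain ⟨⟨i0, k0⟩, hik⟩ := Function.ne_iff.1 hx
  refine Finset.sum_pos' (fun i _ => hB.posSemidef.dotProduct_mulVec_nonneg _) ⟨i0, Finset.mem_univ _, ?_⟩
  refine hB.dotProduct_mulVec_pos fun h0 => hik ?_
  have := congrFun h0 k0
  simpa using this

lemma one_kron_psd {B : Matrix m m ℝ} (hB : B.PosSemidef) :
    ((1 : Matrix n n ℝ) ⊗ₖ B).PosSemidef := by
  refine Matrix.PosSemidef.of_dotProduct_mulVec_nonneg (kron_herm Matrix.isHermitian_one hB.1) fun x => ?_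
  rw [quad_one_kron]
  exact Finset.sum_nonneg fun i _ => hB.dotProduct_mulVec_nonneg _

lemma kron_one_psd {A : Matrix n n ℝ} (hA : A.PosSemidef) :
    (A ⊗ₖ (1 : Matrix m m ℝ)).PosSemidef := by
  refine Matrix.PosSemidef.of_dotProduct_mulVec_nonneg (kron_herm hA.1 Matrix.isHermitian_one) fun x => ?_
  rw [quad_kron_one]
  exact Finset.sum_nonneg fun k _ => hA.dotProduct_mulVec_nonneg _

lemma posdef_of_psd_det_ne {A : Matrix n n ℝ} (hA : A.PosSemidef) (hd : A.det ≠ 0) :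
    A.PosDef := by
  exact hA.posDef_iff_det_ne_zero.2 hd

lemma log_det_le {A : Matrix n n ℝ} [Nonempty n] (hA : A.PosDef) :
    Real.log A.det ≤ (Fintype.card n : ℝ) * Real.log A.trace := by
  have heig := hA.eigenvalues_pos
  have hdet : A.det = ∏ i, hA.1.eigenvalues i := by
    have := hA.1.det_eq_prod_eigenvalues
    simpa using this
  have htr : A.trace = ∑ i, hA.1.eigenvalues i := by
    have h := hA.1.spectral_theorem
    conv_lhs => rw [h, Unitary.conjStarAlgAut_apply]
    rw [Matrix.trace_mul_cycle]
    rw [show (star (hA.1.eigenvectorUnitary : Matrix n n ℝ)) * (hA.1.eigenvectorUnitary : Matrix n n ℝ) = 1 from Unitary.coe_star_mul_self _]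
    simp [Matrix.trace_diagonal]
  rw [hdet, Real.log_prod fun i _ => (heig i).ne']
  calc ∑ i, Real.log (hA.1.eigenvalues i) ≤ ∑ _i : n, Real.log A.trace := by
        refine Finset.sum_le_sum fun i _ => Real.log_le_log (heig i) ?_
        rw [htr]
        exact Finset.single_le_sum (fun j _ => (heig j).le) (Finset.mem_univ i)
    _ = (Fintype.card n : ℝ) * Real.log A.trace := by
        rw [Finset.sum_const, Finset.card_univ, nsmul_eq_mul]

lemma isClosed_psd : IsClosed {A : Matrix n n ℝ | A.PosSemidef} := by
  have : {A : Matrix n n ℝ | A.PosSemidef}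
      = {A : Matrix n n ℝ | Aᴴ = A} ∩ ⋂ x : n → ℝ, {A | 0 ≤ dotProduct (star x) (A *ᵥ x)} := by
    ext A
    simp only [Set.mem_setOf_eq, Set.mem_inter_iff, Set.mem_iInter]
    exact Matrix.posSemidef_iff_dotProduct_mulVec
  rw [this]
  refine IsClosed.inter (isClosed_eq ?_ continuous_id) (isClosed_iInter fun x => ?_)
  · exact Continuous.matrix_conjTranspose continuous_id
  · refine isClosed_le continuous_const ?_
    exact Continuous.dotProduct continuous_const
      (Continuous.matrix_mulVec continuous_id continuous_const)

end StmtAux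
open StmtAux in
/-- The dual function `J(Γ̃, λ, Λ̃)` of the first maximum entropy problem is bounded
below and attains its minimum on the feasible domain. Here `a = |I_s|`, `q = |I_l|`. -/
theorem stmt_10 {p q : ℕ} (hp : 0 < p) (hq : 0 < q)
    (C : Matrix (Fin p × Fin p) (Fin p × Fin p) ℝ) (c : Fin p × Fin p → ℝ)
    (hC : C = Matrix.diagonal c) (hc : ∀ ij, 0 < c ij)
    (r : ℝ) (hr : 0 < r)
    (Q : Matrix (Fin p) (Fin p) ℝ) (hQ : Q.PosDef)
    (P : Matrix (Fin q) (Fin q) ℝ) (hP : P.PosDef)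
    (a : ℕ) (ha : 0 < a) :
    let M : Matrix (Fin p) (Fin p) ℝ → ℝ →
        Matrix (Fin p × Fin p × Fin q) (Fin p × Fin p × Fin q) ℝ :=
      fun Λ lam =>
        lam • ((1 : Matrix (Fin p) (Fin p) ℝ) ⊗ₖ ((1 : Matrix (Fin p) (Fin p) ℝ) ⊗ₖ P⁻¹))
          + Λ ⊗ₖ (1 : Matrix (Fin p × Fin q) (Fin p × Fin q) ℝ)
    let S : Set ((Fin p × Fin p → ℝ) × ℝ × Matrix (Fin p) (Fin p) ℝ) :=
      {x | (∀ ij, 0 < x.1 ij) ∧ 0 ≤ x.2.1 ∧ x.2.2.PosSemidef ∧ (M x.2.2 x.2.1).PosDef}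
    let J : (Fin p × Fin p → ℝ) × ℝ × Matrix (Fin p) (Fin p) ℝ → ℝ :=
      fun x =>
        -(a : ℝ) * Real.log (Matrix.diagonal x.1).det + (Matrix.diagonal x.1 * C).trace
          + x.2.1 * r + (x.2.2 * Q).trace - Real.log (M x.2.2 x.2.1).det
    BddBelow (J '' S) ∧ ∃ x ∈ S, ∀ y ∈ S, J x ≤ J y := by
  intro M S J
  classical
  subst hC
  haveI : NeZero p := ⟨hp.ne'⟩
  haveI : NeZero q := ⟨hq.ne'⟩
  have ha' : (0 : ℝ) < a := by exact_mod_cast ha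
  set K0 : Matrix (Fin p × Fin p × Fin q) (Fin p × Fin p × Fin q) ℝ :=
    (1 : Matrix (Fin p) (Fin p) ℝ) ⊗ₖ ((1 : Matrix (Fin p) (Fin p) ℝ) ⊗ₖ P⁻¹) with hK0def
  have hK0pd : K0.PosDef := one_kron_posdef (one_kron_posdef hP.inv)
  have hMpsd : ∀ (Λ : Matrix (Fin p) (Fin p) ℝ) (lam : ℝ), Λ.PosSemidef → 0 ≤ lam →
      (M Λ lam).PosSemidef := fun Λ lam hΛ hlam =>
    (smul_psd hK0pd.posSemidef hlam).add (kron_one_psd hΛ)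
  -- constants
  set τ : ℝ := K0.trace with hτdef
  have hτ : 0 < τ := posdef_trace_pos hK0pd
  obtain ⟨ε, hε, hεQ⟩ := exists_eps hQ
  set N : ℝ := (Fintype.card (Fin p × Fin p × Fin q) : ℝ) with hNdef
  have hN1 : 1 ≤ N := by
    rw [hNdef]
    exact_mod_cast Fintype.card_pos
  have hN0 : 0 < N := lt_of_lt_of_le one_pos hN1
  set npq : ℝ := (Fintype.card (Fin p × Fin q) : ℝ) with hnpqdef
  have hnpq : 0 < npq := by
    rw [hnpqdef]; exact_mod_cast Fintype.card_pos
  set α : ℝ := max (τ / r) (npq / ε) with hαdef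
  have hα : 0 < α := lt_of_lt_of_le (div_pos hτ hr) (le_max_left _ _)
  set c₀ : ℝ := N * Real.log (2 * N * α) - N with hc₀def
  -- trace of M
  have htrM : ∀ (Λ : Matrix (Fin p) (Fin p) ℝ) (lam : ℝ),
      (M Λ lam).trace = lam * τ + Λ.trace * npq := by
    intro Λ lam
    show (lam • K0 + Λ ⊗ₖ (1 : Matrix (Fin p × Fin q) (Fin p × Fin q) ℝ)).trace = _
    rw [Matrix.trace_add, Matrix.trace_smul,
      Matrix.trace_kronecker Λ (1 : Matrix (Fin p × Fin q) (Fin p × Fin q) ℝ),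
      Matrix.trace_one, smul_eq_mul]
  -- key log det estimate
  have hg : ∀ (Λ : Matrix (Fin p) (Fin p) ℝ) (lam : ℝ), Λ.PosSemidef → 0 ≤ lam →
      (M Λ lam).PosDef →
      Real.log (M Λ lam).det ≤ (lam * r + ε * Λ.trace) / 2 + c₀ := by
    intro Λ lam hΛ hlam hMpd
    set u : ℝ := lam * r + ε * Λ.trace with hudef
    have htrΛ : 0 ≤ Λ.trace := psd_trace_nonneg hΛ
    have hu0 : 0 ≤ u := by
      rw [hudef]
      have := mul_nonneg hlam hr.le
      nlinarith
    have htrpos : 0 < (M Λ lam).trace := posdef_trace_pos hMpd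
    have h1 := log_det_le hMpd
    rw [← hNdef] at h1
    have h2 := log_le_div (show (0:ℝ) < 2 * N * α by positivity) htrpos
    have h3 : (M Λ lam).trace ≤ α * u := by
      rw [htrM, hudef]
      have hτα : τ ≤ α * r := by
        have h := le_max_left (τ / r) (npq / ε)
        rw [← hαdef] at h
        rw [div_le_iff₀ hr] at h
        linarith
      have hnε : npq ≤ α * ε := by
        have h := le_max_right (τ / r) (npq / ε)
        rw [← hαdef] at h
        rw [div_le_iff₀ hε] at h
        linarith
      nlinarith [mul_le_mul_of_nonneg_left hτα hlam, mul_le_mul_of_nonneg_left hnε htrΛ]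
    have h4 : (M Λ lam).trace / (2 * N * α) ≤ u / (2 * N) := by
      rw [div_le_div_iff₀ (by positivity) (by positivity)]
      nlinarith [mul_le_mul_of_nonneg_right h3 (show (0:ℝ) ≤ 2 * N by positivity)]
    have h5 := mul_le_mul_of_nonneg_left
      (show Real.log (M Λ lam).trace ≤ u / (2 * N) - 1 + Real.log (2 * N * α) by linarith)
      hN0.le
    have h6 : N * (u / (2 * N) - 1 + Real.log (2 * N * α)) = u / 2 + c₀ := by
      rw [hc₀def]
      field_simp
      ring
    linarith
  -- decomposition of the γ part
  have hGsplit : ∀ γ : Fin p × Fin p → ℝ, (∀ i, 0 < γ i) →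
      -(a : ℝ) * Real.log (Matrix.diagonal γ).det + (Matrix.diagonal γ * Matrix.diagonal c).trace
        = ∑ i, (c i * γ i - a * Real.log (γ i)) := by
    intro γ hγ
    rw [Matrix.det_diagonal, Real.log_prod fun i _ => (hγ i).ne',
      Matrix.diagonal_mul_diagonal, Matrix.trace_diagonal]
    rw [Finset.mul_sum, ← Finset.sum_add_distrib]
    exact Finset.sum_congr rfl fun i _ => by ring
  -- per-coordinate lower bound
  set mm : Fin p × Fin p → ℝ := fun i => (a : ℝ) - a * Real.log (a / c i) with hmmdef
  have hphilow : ∀ (i : Fin p × Fin p) (t : ℝ), 0 < t → mm i ≤ c i * t - a * Real.log t := by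
    intro i t ht
    have h := log_le_div (div_pos ha' (hc i)) ht
    have e : t / ((a : ℝ) / c i) = t * c i / a := by
      field_simp
    rw [e] at h
    have h' := mul_le_mul_of_nonneg_left h ha'.le
    have e2 : (a : ℝ) * (t * c i / a - 1 + Real.log (a / c i))
        = t * c i - a + a * Real.log (a / c i) := by
      field_simp
    rw [e2] at h'
    rw [hmmdef]
    simp only
    nlinarith
  set Mabs : ℝ := ∑ i, |mm i| with hMabsdef
  have hMabs0 : 0 ≤ Mabs := Finset.sum_nonneg fun i _ => abs_nonneg _
  -- base point
  set x₀ : (Fin p × Fin p → ℝ) × ℝ × Matrix (Fin p) (Fin p) ℝ :=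
    (fun _ => 1, 1, 0) with hx₀def
  have hM₀ : M (0 : Matrix (Fin p) (Fin p) ℝ) 1 = K0 := by
    show (1 : ℝ) • K0 + (0 : Matrix (Fin p) (Fin p) ℝ) ⊗ₖ _ = K0
    rw [one_smul, Matrix.zero_kronecker, add_zero]
  have hx₀S : x₀ ∈ S := by
    refine ⟨fun ij => one_pos, zero_le_one, Matrix.PosSemidef.zero, ?_⟩
    show (M 0 1).PosDef
    rw [hM₀]; exact hK0pd
  set b : ℝ := J x₀ with hbdef
  set Bs : ℝ := b + 2 * Mabs + c₀ with hBsdef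
  set U : ℝ := 2 * Bs with hUdef
  set γlo : ℝ := Real.exp (-Bs / a) with hγlodef
  set γhi : Fin p × Fin p → ℝ := fun i => 2 * (Bs - a + a * Real.log (2 * a / c i)) / c i
    with hγhidef
  set δ : ℝ := Real.exp (-(b + Mabs)) with hδdef
  set K' : Set ((Fin p × Fin p → ℝ) × ℝ × Matrix (Fin p) (Fin p) ℝ) :=
    {x | (∀ i, γlo ≤ x.1 i) ∧ (∀ i, x.1 i ≤ γhi i) ∧ 0 ≤ x.2.1 ∧ x.2.1 ≤ U / r ∧
      x.2.2.PosSemidef ∧ (∀ i j, |x.2.2 i j| ≤ U / ε) ∧ δ ≤ (M x.2.2 x.2.1).det} with hK'def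
  have hγlo0 : 0 < γlo := Real.exp_pos _
  have hδ0 : 0 < δ := Real.exp_pos _
  -- K' ⊆ S
  have hK'S : K' ⊆ S := by
    rintro x ⟨h1, _, h3, _, h5, _, h7⟩
    refine ⟨fun ij => lt_of_lt_of_le hγlo0 (h1 ij), h3, h5, ?_⟩
    exact posdef_of_psd_det_ne (hMpsd _ _ h5 h3) (ne_of_gt (lt_of_lt_of_le hδ0 h7))
  -- sublevel set inclusion
  have hJK : ∀ x ∈ S, J x ≤ b → x ∈ K' := by
    rintro ⟨γ, lam, Λ⟩ ⟨hγ, hlam, hΛ, hMpd⟩ hJx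
    have hJeq : J (γ, lam, Λ) = (∑ i, (c i * γ i - a * Real.log (γ i)))
        + (lam * r + (Λ * Q).trace - Real.log (M Λ lam).det) := by
      show -(a : ℝ) * Real.log (Matrix.diagonal γ).det
          + (Matrix.diagonal γ * Matrix.diagonal c).trace
          + lam * r + (Λ * Q).trace - Real.log (M Λ lam).det = _
      rw [hGsplit γ hγ]
      ring
    rw [hJeq] at hJx
    set g : ℝ := lam * r + (Λ * Q).trace - Real.log (M Λ lam).det with hgdef
    have htrΛ : 0 ≤ Λ.trace := psd_trace_nonneg hΛ
    have hu0 : 0 ≤ lam * r + ε * Λ.trace := by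
      have := mul_nonneg hlam hr.le
      nlinarith
    have hglow : (lam * r + ε * Λ.trace) / 2 - c₀ ≤ g := by
      have h1 := hg Λ lam hΛ hlam hMpd
      have h2 := hεQ Λ hΛ
      rw [hgdef]
      linarith
    have hTlow : ∀ T : Finset (Fin p × Fin p), -Mabs ≤ ∑ i ∈ T, mm i := by
      intro T
      have h1 : ∑ i ∈ T, -|mm i| ≤ ∑ i ∈ T, mm i :=
        Finset.sum_le_sum fun i _ => neg_abs_le _
      have h2 : ∑ i ∈ T, |mm i| ≤ Mabs := by
        rw [hMabsdef]
        exact Finset.sum_le_sum_of_subset_of_nonneg (Finset.subset_univ T)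
          fun i _ _ => abs_nonneg _
      have h3 : ∑ i ∈ T, -|mm i| = -∑ i ∈ T, |mm i| := by
        rw [← Finset.sum_neg_distrib]
      linarith
    have hsumφ_low : -Mabs ≤ ∑ i, (c i * γ i - a * Real.log (γ i)) := by
      refine le_trans (hTlow Finset.univ) (Finset.sum_le_sum fun i _ => hphilow i _ (hγ i))
    -- bound on u
    have hu : lam * r + ε * Λ.trace ≤ U := by
      rw [hUdef, hBsdef]
      linarith
    -- per-coordinate bound
    have hφle : ∀ i, c i * γ i - a * Real.log (γ i) ≤ Bs := by
      intro i
      have hsplit : ∑ j, (c j * γ j - a * Real.log (γ j))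
          = (c i * γ i - a * Real.log (γ i))
            + ∑ j ∈ Finset.univ.erase i, (c j * γ j - a * Real.log (γ j)) :=
        (Finset.add_sum_erase _ _ (Finset.mem_univ i)).symm
      have herase : -Mabs ≤ ∑ j ∈ Finset.univ.erase i, (c j * γ j - a * Real.log (γ j)) :=
        le_trans (hTlow _) (Finset.sum_le_sum fun j _ => hphilow j _ (hγ j))
      rw [hBsdef]
      nlinarith [hglow, hu0, hMabs0]
    refine ⟨?_, ?_, hlam, ?_, hΛ, ?_, ?_⟩
    · -- γlo ≤ γ i
      intro i
      have h := hφle i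
      have hcγ : 0 < c i * γ i := mul_pos (hc i) (hγ i)
      have hlog : -Bs ≤ (a : ℝ) * Real.log (γ i) := by linarith
      have hlog2 : -Bs / a ≤ Real.log (γ i) := by
        rw [div_le_iff₀ ha']
        linarith [mul_comm (Real.log (γ i)) (a : ℝ)]
      calc γlo = Real.exp (-Bs / a) := by rw [hγlodef]
        _ ≤ Real.exp (Real.log (γ i)) := Real.exp_le_exp.2 hlog2
        _ = γ i := Real.exp_log (hγ i)
    · -- γ i ≤ γhi i
      intro i
      have h := hφle i
      have hld := log_le_div (s := 2 * (a:ℝ) / c i) (div_pos (by positivity) (hc i)) (hγ i)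
      have e : γ i / (2 * (a:ℝ) / c i) = γ i * c i / (2 * a) := by
        field_simp
      rw [e] at hld
      have h' := mul_le_mul_of_nonneg_left hld ha'.le
      have e2 : (a : ℝ) * (γ i * c i / (2 * a) - 1 + Real.log (2 * a / c i))
          = γ i * c i / 2 - a + a * Real.log (2 * a / c i) := by
        field_simp
      rw [e2] at h'
      rw [hγhidef]
      simp only
      rw [le_div_iff₀ (hc i)]
      nlinarith
    · -- lam ≤ U / r
      rw [le_div_iff₀ hr]
      nlinarith
    · -- |Λ i j| ≤ U / ε
      intro i j
      have h1 := psd_abs_le_trace hΛ i j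
      have h2 : Λ.trace ≤ U / ε := by
        rw [le_div_iff₀ hε]
        nlinarith [mul_nonneg hlam hr.le]
      linarith
    · -- δ ≤ det M
      have hgup : g ≤ b + Mabs := by linarith
      have hlogdet : -(b + Mabs) ≤ Real.log (M Λ lam).det := by
        have h2 := hεQ Λ hΛ
        have h3 : 0 ≤ lam * r := mul_nonneg hlam hr.le
        rw [hgdef] at hgup
        nlinarith
      calc δ = Real.exp (-(b + Mabs)) := by rw [hδdef]
        _ ≤ Real.exp (Real.log (M Λ lam).det) := Real.exp_le_exp.2 hlogdet
        _ = (M Λ lam).det := Real.exp_log hMpd.det_pos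
  have hx₀K' : x₀ ∈ K' := hJK x₀ hx₀S le_rfl
  -- continuity of M and its det
  have hMcont : Continuous fun x : (Fin p × Fin p → ℝ) × ℝ × Matrix (Fin p) (Fin p) ℝ =>
      M x.2.2 x.2.1 := by
    show Continuous fun x : (Fin p × Fin p → ℝ) × ℝ × Matrix (Fin p) (Fin p) ℝ =>
      x.2.1 • K0 + x.2.2 ⊗ₖ (1 : Matrix (Fin p × Fin q) (Fin p × Fin q) ℝ)
    refine Continuous.add ?_ ?_
    · exact (continuous_fst.comp continuous_snd).smul continuous_const
    · refine continuous_matrix fun i j => ?_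
      show Continuous fun x : (Fin p × Fin p → ℝ) × ℝ × Matrix (Fin p) (Fin p) ℝ =>
        x.2.2 i.1 j.1 * (1 : Matrix (Fin p × Fin q) (Fin p × Fin q) ℝ) i.2 j.2
      exact (Continuous.matrix_elem (continuous_snd.comp continuous_snd) i.1 j.1).mul
        continuous_const
  have hdetMcont : Continuous fun x : (Fin p × Fin p → ℝ) × ℝ × Matrix (Fin p) (Fin p) ℝ =>
      (M x.2.2 x.2.1).det := hMcont.matrix_det
  -- closedness
  have hclosed : IsClosed K' := by
    rw [hK'def]
    simp only [Set.setOf_and]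
    refine IsClosed.inter ?_ (IsClosed.inter ?_ (IsClosed.inter ?_ (IsClosed.inter ?_
      (IsClosed.inter ?_ (IsClosed.inter ?_ ?_)))))
    · rw [Set.setOf_forall]
      exact isClosed_iInter fun i =>
        isClosed_le continuous_const ((continuous_apply i).comp continuous_fst)
    · rw [Set.setOf_forall]
      exact isClosed_iInter fun i =>
        isClosed_le ((continuous_apply i).comp continuous_fst) continuous_const
    · exact isClosed_le continuous_const (continuous_fst.comp continuous_snd)
    · exact isClosed_le (continuous_fst.comp continuous_snd) continuous_const
    · exact isClosed_psd.preimage (continuous_snd.comp continuous_snd)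
    · rw [Set.setOf_forall]
      refine isClosed_iInter fun i => ?_
      rw [Set.setOf_forall]
      refine isClosed_iInter fun j => ?_
      exact isClosed_le
        (Continuous.matrix_elem (continuous_snd.comp continuous_snd) i j).abs continuous_const
    · exact isClosed_le continuous_const hdetMcont
  -- compactness
  have hcpt : IsCompact K' := by
    have hΦ : Continuous (fun y : (Fin p × Fin p → ℝ) × ℝ × (Fin p → Fin p → ℝ) =>
        ((y.1, y.2.1, Matrix.of y.2.2) :
          (Fin p × Fin p → ℝ) × ℝ × Matrix (Fin p) (Fin p) ℝ)) := by
      refine continuous_fst.prodMk ((continuous_fst.comp continuous_snd).prodMk ?_)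
      exact continuous_matrix fun i j =>
        (continuous_apply j).comp ((continuous_apply i).comp (continuous_snd.comp continuous_snd))
    have hbig : IsCompact ((fun y : (Fin p × Fin p → ℝ) × ℝ × (Fin p → Fin p → ℝ) =>
        ((y.1, y.2.1, Matrix.of y.2.2) :
          (Fin p × Fin p → ℝ) × ℝ × Matrix (Fin p) (Fin p) ℝ)) ''
        (Set.Icc ((fun _ => γlo, 0, fun _ _ => -(U / ε)) :
            (Fin p × Fin p → ℝ) × ℝ × (Fin p → Fin p → ℝ))
          ((γhi, U / r, fun _ _ => U / ε) :
            (Fin p × Fin p → ℝ) × ℝ × (Fin p → Fin p → ℝ)))) :=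
      isCompact_Icc.image hΦ
    refine hbig.of_isClosed_subset hclosed ?_
    rintro x ⟨h1, h2, h3, h4, _, h6, _⟩
    refine ⟨(x.1, x.2.1, fun i j => x.2.2 i j), ?_, rfl⟩
    rw [Set.mem_Icc]
    refine ⟨⟨h1, h3, fun i j => ?_⟩, ⟨h2, h4, fun i j => ?_⟩⟩
    · exact (abs_le.1 (h6 i j)).1
    · exact (abs_le.1 (h6 i j)).2
  -- continuity
  have hcont : ContinuousOn J K' := by
    rintro x ⟨h1, _, _, _, _, _, h7⟩
    refine ContinuousAt.continuousWithinAt ?_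
    have hdet1 : (0 : ℝ) < (Matrix.diagonal x.1).det := by
      rw [Matrix.det_diagonal]
      exact Finset.prod_pos fun i _ => lt_of_lt_of_le hγlo0 (h1 i)
    have hdet2 : (0 : ℝ) < (M x.2.2 x.2.1).det := lt_of_lt_of_le hδ0 h7
    show ContinuousAt (fun x : (Fin p × Fin p → ℝ) × ℝ × Matrix (Fin p) (Fin p) ℝ =>
      -(a : ℝ) * Real.log (Matrix.diagonal x.1).det
        + (Matrix.diagonal x.1 * Matrix.diagonal c).trace
        + x.2.1 * r + (x.2.2 * Q).trace - Real.log (M x.2.2 x.2.1).det) x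
    have p1 : ContinuousAt (fun x : (Fin p × Fin p → ℝ) × ℝ × Matrix (Fin p) (Fin p) ℝ =>
        Real.log (Matrix.diagonal x.1).det) x :=
      ContinuousAt.log
        ((Continuous.matrix_diagonal continuous_fst).matrix_det.continuousAt) hdet1.ne'
    have p2 : Continuous (fun x : (Fin p × Fin p → ℝ) × ℝ × Matrix (Fin p) (Fin p) ℝ =>
        (Matrix.diagonal x.1 * Matrix.diagonal c).trace) :=
      ((Continuous.matrix_diagonal continuous_fst).matrix_mul continuous_const).matrix_trace
    have p4 : Continuous (fun x : (Fin p × Fin p → ℝ) × ℝ × Matrix (Fin p) (Fin p) ℝ =>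
        (x.2.2 * Q).trace) :=
      ((continuous_snd.comp continuous_snd).matrix_mul continuous_const).matrix_trace
    have p5 : ContinuousAt (fun x : (Fin p × Fin p → ℝ) × ℝ × Matrix (Fin p) (Fin p) ℝ =>
        Real.log (M x.2.2 x.2.1).det) x :=
      ContinuousAt.log hdetMcont.continuousAt hdet2.ne'
    exact ((((p1.const_mul (-(a : ℝ))).add p2.continuousAt).add
      (((continuous_fst.comp continuous_snd).mul continuous_const).continuousAt)).add
      p4.continuousAt).sub p5
  obtain ⟨xs, hxsK, hmin'⟩ := hcpt.exists_isMinOn ⟨x₀, hx₀K'⟩ hcont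
  have hmin : ∀ y ∈ K', J xs ≤ J y := fun y hy => hmin' hy
  have hminS : ∀ y ∈ S, J xs ≤ J y := by
    intro y hy
    by_cases hJy : J y ≤ b
    · exact hmin y (hJK y hy hJy)
    · exact le_trans (hmin x₀ hx₀K') (le_of_not_ge hJy)
  exact ⟨⟨J xs, by rintro v ⟨y, hy, rfl⟩; exact hminS y hy⟩, xs, hK'S hxsK, hminS⟩
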